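/- arXiv:2210.02192 — 2 statements merged into one kernel-verified Lean document; each statement's English description precedes it below -/
import Mathlib

section
/- For any critical point (W, H, b) of the regularized loss f(W,H,b) = g(WH + b1ᵀ) + (λ_W/2)‖W‖_F² + (λ_H/2)‖H‖_F² + (λ_b/2)‖b‖₂², the weights and features are balanced: λ_W·WᵀW = λ_H·HHᵀ. -/
open Matrix

theorem critical_point_balance_general {K d N : ℕ}
    (lamW lamH : ℝ)
    (W : Matrix (Fin K) (Fin d) ℝ) (H : Matrix (Fin d) (Fin N) ℝ)
    (G : Matrix (Fin K) (Fin N) ℝ)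
    (hcritW : G * Hᵀ + lamW • W = 0)
    (hcritH : Wᵀ * G + lamH • H = 0) :
    lamW • (Wᵀ * W) = lamH • (H * Hᵀ) := by
  have hGH : G * Hᵀ = -(lamW • W) := eq_neg_of_add_eq_zero_left hcritW
  have hWG : Wᵀ * G = -(lamH • H) := eq_neg_of_add_eq_zero_left hcritH
  calc lamW • (Wᵀ * W) = -(Wᵀ * (G * Hᵀ)) := by rw [hGH, Matrix.mul_neg, Matrix.mul_smul, neg_neg]
    _ = -(Wᵀ * G * Hᵀ) := by rw [Matrix.mul_assoc]
    _ = lamH • (H * Hᵀ) := by rw [hWG, Matrix.neg_mul, Matrix.smul_mul, neg_neg]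

/-- Balance between classifier weights and features at any critical point of
`f(W,H,b) = g(WH + b1ᵀ) + (λ_W/2)‖W‖_F² + (λ_H/2)‖H‖_F² + (λ_b/2)‖b‖₂²`:
writing `G = ∇g(WH + b1ᵀ)`, the critical point conditions
`∇_W f = G Hᵀ + λ_W W = 0` and `∇_H f = Wᵀ G + λ_H H = 0`
imply the balance relation `λ_W WᵀW = λ_H HHᵀ`. -/
theorem critical_point_balance {K d N : ℕ}
    (lamW lamH lamb : ℝ) (hW : 0 < lamW) (hH : 0 < lamH) (hb : 0 < lamb)
    (W : Matrix (Fin K) (Fin d) ℝ) (H : Matrix (Fin d) (Fin N) ℝ) (b : Fin K → ℝ)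
    (G : Matrix (Fin K) (Fin N) ℝ)
    (hcritW : G * Hᵀ + lamW • W = 0)
    (hcritH : Wᵀ * G + lamH • H = 0) :
    lamW • (Wᵀ * W) = lamH • (H * Hᵀ) :=
  critical_point_balance_general lamW lamH W H G hcritW hcritH
end

section
/- For any matrices W ∈ ℝ^{K×d} and H ∈ ℝ^{d×N} and positive reals λ_W, λ_H, the weighted sum of squared Frobenius norms dominates the nuclear norm of the product: (λ_W/2)‖W‖_F² + (λ_H/2)‖H‖_F² ≥ √(λ_W λ_H)·‖WH‖_*, where ‖·‖_* denotes the nuclear norm (sum of singular values). -/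
open Matrix

/-- Singular values of a real matrix `Z`: square roots of the eigenvalues of `Z Zᴴ`. -/
noncomputable def singVals {K N : ℕ} (Z : Matrix (Fin K) (Fin N) ℝ) : Fin K → ℝ :=
  fun i => Real.sqrt ((Matrix.isHermitian_mul_conjTranspose_self Z).eigenvalues i)

/-- Nuclear norm: sum of singular values. -/
noncomputable def nuclearNorm {K N : ℕ} (Z : Matrix (Fin K) (Fin N) ℝ) : ℝ :=
  ∑ i, singVals Z i

/-! Let `uᵢ` be orthonormal eigenvectors of `Z Zᴴ`, `Z = W H`, with eigenvalues `σᵢ² > 0`, and put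
`vᵢ = Zᴴ uᵢ / σᵢ`. The `vᵢ` are again orthonormal and `σᵢ = ⟪uᵢ, Z vᵢ⟫ = ⟪Wᴴ uᵢ, H vᵢ⟫`, so
Cauchy–Schwarz and Bessel's inequality give `‖W H‖_* ≤ ‖W‖_F ‖H‖_F`. The theorem follows by AM–GM:
`√(λ_W λ_H) ‖W‖_F ‖H‖_F ≤ (λ_W ‖W‖_F² + λ_H ‖H‖_F²) / 2`. -/

open WithLp (toLp)
open scoped InnerProductSpace

section
variable {ι l m n : Type*} [Fintype ι] [Fintype l] [Fintype m] [Fintype n] [DecidableEq n]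

theorem Orthonormal.sum_norm_toEuclideanLin_sq_le {v : ι → EuclideanSpace ℝ n}
    (hv : Orthonormal ℝ v) (A : Matrix m n ℝ) :
    ∑ i, ‖A.toEuclideanLin (v i)‖ ^ 2 ≤ ∑ r, ∑ c, A r c ^ 2 := by
  have hrow : ∀ x r, A.toEuclideanLin x r = ⟪x, toLp 2 (A r)⟫_ℝ := fun x r => by
    simp [toLpLin_apply, mulVec, dotProduct, PiLp.inner_apply]
  calc ∑ i, ‖A.toEuclideanLin (v i)‖ ^ 2 = ∑ r, ∑ i, ‖⟪v i, toLp 2 (A r)⟫_ℝ‖ ^ 2 := by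
        simp only [EuclideanSpace.real_norm_sq_eq, hrow, Real.norm_eq_abs, sq_abs]
        exact Finset.sum_comm
    _ ≤ ∑ r, ‖toLp 2 (A r)‖ ^ 2 := Finset.sum_le_sum fun r _ => hv.sum_inner_products_le _
    _ = ∑ r, ∑ c, A r c ^ 2 := by simp only [EuclideanSpace.real_norm_sq_eq]

theorem Orthonormal.sum_inner_toEuclideanLin_mul_le {u : ι → EuclideanSpace ℝ m}
    {v : ι → EuclideanSpace ℝ n} (hu : Orthonormal ℝ u) (hv : Orthonormal ℝ v)
    (W : Matrix m l ℝ) (H : Matrix l n ℝ) :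
    ∑ i, ⟪u i, (W * H).toEuclideanLin (v i)⟫_ℝ ≤
      √(∑ r, ∑ c, W r c ^ 2) * √(∑ r, ∑ c, H r c ^ 2) := by
  classical
  have hadj : ∀ i, ⟪u i, (W * H).toEuclideanLin (v i)⟫_ℝ =
      ⟪Wᴴ.toEuclideanLin (u i), H.toEuclideanLin (v i)⟫_ℝ := fun i => by
    rw [toEuclideanLin_conjTranspose_eq_adjoint, LinearMap.adjoint_inner_left, toLpLin_mul_same]
    rfl
  have hWt : ∑ r, ∑ c, Wᴴ r c ^ 2 = ∑ r, ∑ c, W r c ^ 2 := by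
    simp only [conjTranspose_apply, star_trivial]
    exact Finset.sum_comm
  calc ∑ i, ⟪u i, (W * H).toEuclideanLin (v i)⟫_ℝ
      ≤ ∑ i, ‖Wᴴ.toEuclideanLin (u i)‖ * ‖H.toEuclideanLin (v i)‖ :=
        Finset.sum_le_sum fun i _ => (hadj i).trans_le (real_inner_le_norm _ _)
    _ ≤ √(∑ i, ‖Wᴴ.toEuclideanLin (u i)‖ ^ 2) * √(∑ i, ‖H.toEuclideanLin (v i)‖ ^ 2) :=
        Real.sum_mul_le_sqrt_mul_sqrt _ _ _
    _ ≤ √(∑ r, ∑ c, W r c ^ 2) * √(∑ r, ∑ c, H r c ^ 2) := by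
        rw [← hWt]
        gcongr
        · exact hu.sum_norm_toEuclideanLin_sq_le _
        · exact hv.sum_norm_toEuclideanLin_sq_le _
end

theorem Matrix.IsHermitian.toEuclideanLin_eigenvectorBasis {𝕜 n : Type*} [RCLike 𝕜] [Fintype n]
    [DecidableEq n] {A : Matrix n n 𝕜} (hA : A.IsHermitian) (j : n) :
    A.toEuclideanLin (hA.eigenvectorBasis j) = hA.eigenvalues j • hA.eigenvectorBasis j := by
  rw [toLpLin_apply, hA.mulVec_eigenvectorBasis]
  rfl

theorem exists_orthonormal_nuclearNorm_eq_sum_inner {K N : ℕ} (Z : Matrix (Fin K) (Fin N) ℝ) :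
    ∃ (s : Finset (Fin K)) (u : s → EuclideanSpace ℝ (Fin K)) (v : s → EuclideanSpace ℝ (Fin N)),
      Orthonormal ℝ u ∧ Orthonormal ℝ v ∧
        nuclearNorm Z = ∑ i, ⟪u i, Z.toEuclideanLin (v i)⟫_ℝ := by
  set hZ := isHermitian_mul_conjTranspose_self Z
  set b := hZ.eigenvectorBasis
  set μ := hZ.eigenvalues
  have hb := orthonormal_iff_ite.mp b.orthonormal
  have hgram : ∀ i j, ⟪Zᴴ.toEuclideanLin (b i), Zᴴ.toEuclideanLin (b j)⟫_ℝ =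
      if i = j then μ i else 0 := fun i j => by
    rw [toEuclideanLin_conjTranspose_eq_adjoint, LinearMap.adjoint_inner_left,
      ← toEuclideanLin_conjTranspose_eq_adjoint, ← LinearMap.comp_apply, ← toLpLin_mul_same,
      hZ.toEuclideanLin_eigenvectorBasis, inner_smul_right, hb]
    split_ifs with hij
    · rw [hij, mul_one]
    · rw [mul_zero]
  set s := Finset.univ.filter (fun i => 0 < μ i)
  have hμ : ∀ i : s, 0 < μ i := fun i => (Finset.mem_filter.mp i.2).2
  have hdiag : ∀ i : s,
      ⟪b i, Z.toEuclideanLin ((√(μ i))⁻¹ • Zᴴ.toEuclideanLin (b i))⟫_ℝ = √(μ i) := fun i => by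
    rw [map_smul, inner_smul_right, ← LinearMap.adjoint_inner_left,
      ← toEuclideanLin_conjTranspose_eq_adjoint, hgram, if_pos rfl, inv_mul_eq_div, Real.div_sqrt]
  refine ⟨s, fun i => b i, fun i => (√(μ i))⁻¹ • Zᴴ.toEuclideanLin (b i),
    b.orthonormal.comp _ Subtype.val_injective, ?_, ?_⟩
  · rw [orthonormal_iff_ite]
    intro i j
    simp only [inner_smul_left, inner_smul_right, hgram, Subtype.ext_iff, conj_trivial]
    split_ifs with hij
    · obtain rfl := Subtype.ext hij
      rw [← mul_assoc, ← mul_inv, Real.mul_self_sqrt (hμ i).le, inv_mul_cancel₀ (hμ i).ne']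
    · simp
  · calc nuclearNorm Z = ∑ i ∈ s, √(μ i) :=
          (Finset.sum_filter_of_ne fun i _ h => Real.sqrt_ne_zero'.mp h).symm
      _ = ∑ i : s, √(μ i) := (Finset.sum_coe_sort s _).symm
      _ = _ := Finset.sum_congr rfl fun i _ => (hdiag i).symm

theorem nuclearNorm_mul_le {K N : ℕ} {l : Type*} [Fintype l] (W : Matrix (Fin K) l ℝ)
    (H : Matrix l (Fin N) ℝ) :
    nuclearNorm (W * H) ≤ √(∑ i, ∑ j, W i j ^ 2) * √(∑ i, ∑ j, H i j ^ 2) := by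
  obtain ⟨s, u, v, hu, hv, hnuc⟩ := exists_orthonormal_nuclearNorm_eq_sum_inner (W * H)
  exact hnuc ▸ hu.sum_inner_toEuclideanLin_mul_le hv W H

/-- `(λ_W/2)‖W‖_F² + (λ_H/2)‖H‖_F² ≥ √(λ_W λ_H) ‖WH‖_*`. -/
theorem weighted_frobSq_ge_nuclearNorm {K d N : ℕ}
    (lamW lamH : ℝ) (hW : 0 < lamW) (hH : 0 < lamH)
    (W : Matrix (Fin K) (Fin d) ℝ) (H : Matrix (Fin d) (Fin N) ℝ) :
    lamW / 2 * ∑ i, ∑ j, (W i j) ^ 2 + lamH / 2 * ∑ i, ∑ j, (H i j) ^ 2 ≥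
      Real.sqrt (lamW * lamH) * nuclearNorm (W * H) := by
  set F := ∑ i, ∑ j, W i j ^ 2
  set G := ∑ i, ∑ j, H i j ^ 2
  calc √(lamW * lamH) * nuclearNorm (W * H) ≤ √(lamW * lamH) * (√F * √G) := by
        gcongr
        exact nuclearNorm_mul_le W H
    _ = √(lamW * F) * √(lamH * G) := by
        rw [Real.sqrt_mul hW.le, Real.sqrt_mul hW.le, Real.sqrt_mul hH.le]
        ring
    _ ≤ (√(lamW * F) ^ 2 + √(lamH * G) ^ 2) / 2 := by
        linarith [two_mul_le_add_sq √(lamW * F) √(lamH * G)]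
    _ = lamW / 2 * F + lamH / 2 * G := by
        rw [Real.sq_sqrt (by positivity), Real.sq_sqrt (by positivity)]
        ring
end
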